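/- Let m ≥ 1 and let c : [0,1] → ℝ^m and r : [0,1] → ℝ be differentiable functions satisfying ‖c'(t)‖ < r'(t) for every t ∈ [0,1]. Then for all 0 ≤ τ < t ≤ 1, the closed ball of centre c(τ) and radius r(τ) is contained in the open ball of centre c(t) and radius r(t). In particular, the spheres {z ∈ ℝ^m : ‖z - c(t)‖ = r(t)}, t ∈ [0,1], are pairwise disjoint, and they form an expanding family of nested spheres. -/

import Mathlib

/-!
Comparing `c` with `r` by the mean value inequality gives `‖c t - c τ‖ ≤ r t - r τ` for
`τ ≤ t`. The inequality is strict for `τ < t`: just to the right of `τ` the slopes of `c` and `r`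
are close to `c' τ` and `r' τ`, so `‖c s - c τ‖ < r s - r τ` for some `s ∈ (τ, t]`, and the
non-strict bound on `[s, t]` and the triangle inequality finish. Then
`‖c t - c τ‖ + r τ < r t`, which gives `closedBall (c τ) (r τ) ⊆ ball (c t) (r t)`,
and spheres of different parameters are disjoint since one lies inside the open ball of the other.
-/

open Set Metric Filter Topology

section Fencing

variable {E : Type*} [NormedAddCommGroup E] [NormedSpace ℝ E]
  {f f' : ℝ → E} {B B' : ℝ → ℝ} {a b : ℝ}

theorem norm_sub_le_sub_of_norm_deriv_right_le (hab : a ≤ b)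
    (hf : ContinuousOn f (Icc a b)) (hf' : ∀ x ∈ Ico a b, HasDerivWithinAt f (f' x) (Ici x) x)
    (hB : ContinuousOn B (Icc a b)) (hB' : ∀ x ∈ Ico a b, HasDerivWithinAt B (B' x) (Ici x) x)
    (bound : ∀ x ∈ Ico a b, ‖f' x‖ ≤ B' x) :
    ‖f b - f a‖ ≤ B b - B a := by
  refine image_norm_le_of_norm_deriv_right_le_deriv_boundary' (hf.sub continuousOn_const)
    (fun x hx => (hf' x hx).sub_const (f a)) (by simp) (hB.sub continuousOn_const)
    (fun x hx => (hB' x hx).sub_const (B a)) bound (right_mem_Icc.2 hab)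

theorem eventually_norm_sub_lt_sub_of_norm_deriv_right_lt {fa : E} {Ba : ℝ}
    (hf : HasDerivWithinAt f fa (Ici a) a) (hB : HasDerivWithinAt B Ba (Ici a) a)
    (hlt : ‖fa‖ < Ba) :
    ∀ᶠ s in 𝓝[>] a, ‖f s - f a‖ < B s - B a := by
  have hf_slope : Tendsto (slope f a) (𝓝[>] a) (𝓝 fa) := by
    simpa using hasDerivWithinAt_iff_tendsto_slope.1 hf
  have hB_slope : Tendsto (slope B a) (𝓝[>] a) (𝓝 Ba) := by
    simpa using hasDerivWithinAt_iff_tendsto_slope.1 hB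
  filter_upwards [(hf_slope.norm.sub hB_slope).eventually (gt_mem_nhds (sub_neg.2 hlt)),
    self_mem_nhdsWithin] with s hs (has : a < s)
  have hpos : 0 < s - a := sub_pos.2 has
  calc ‖f s - f a‖ = (s - a) * ‖slope f a s‖ := by
        rw [← vsub_eq_sub, ← sub_smul_slope, norm_smul, Real.norm_of_nonneg hpos.le]
    _ < (s - a) * slope B a s := mul_lt_mul_of_pos_left (sub_neg.1 hs) hpos
    _ = B s - B a := by rw [← smul_eq_mul, sub_smul_slope, vsub_eq_sub]

theorem norm_sub_lt_sub_of_norm_deriv_right_lt (hab : a < b)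
    (hf : ContinuousOn f (Icc a b)) (hf' : ∀ x ∈ Ico a b, HasDerivWithinAt f (f' x) (Ici x) x)
    (hB : ContinuousOn B (Icc a b)) (hB' : ∀ x ∈ Ico a b, HasDerivWithinAt B (B' x) (Ici x) x)
    (bound : ∀ x ∈ Ico a b, ‖f' x‖ < B' x) :
    ‖f b - f a‖ < B b - B a := by
  have ha : a ∈ Ico a b := left_mem_Ico.2 hab
  obtain ⟨s, hs_lt, hs_mem⟩ :=
    ((eventually_norm_sub_lt_sub_of_norm_deriv_right_lt (hf' a ha) (hB' a ha) (bound a ha)).and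
      (Ioc_mem_nhdsGT hab)).exists
  have hsub : Icc s b ⊆ Icc a b := Icc_subset_Icc_left hs_mem.1.le
  have hsub' : Ico s b ⊆ Ico a b := Ico_subset_Ico_left hs_mem.1.le
  have hs_le : ‖f b - f s‖ ≤ B b - B s :=
    norm_sub_le_sub_of_norm_deriv_right_le hs_mem.2 (hf.mono hsub)
      (fun x hx => hf' x (hsub' hx)) (hB.mono hsub) (fun x hx => hB' x (hsub' hx))
      (fun x hx => (bound x (hsub' hx)).le)
  calc ‖f b - f a‖ ≤ ‖f b - f s‖ + ‖f s - f a‖ := norm_sub_le_norm_sub_add_norm_sub _ _ _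
    _ < (B b - B s) + (B s - B a) := add_lt_add_of_le_of_lt hs_le hs_lt
    _ = B b - B a := by ring

end Fencing

theorem sphere_inter_sphere_eq_empty_of_closedBall_subset_ball {X : Type*} [PseudoMetricSpace X]
    {x y : X} {ε δ : ℝ} (h : closedBall x ε ⊆ ball y δ) :
    sphere x ε ∩ sphere y δ = ∅ :=
  disjoint_iff_inter_eq_empty.1 <|
    sphere_disjoint_ball.symm.mono_left (sphere_subset_closedBall.trans h)

theorem expanding_nested_spheres_general (m : ℕ)
    (c : ℝ → EuclideanSpace ℝ (Fin m)) (r : ℝ → ℝ)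
    (c' : ℝ → EuclideanSpace ℝ (Fin m)) (r' : ℝ → ℝ)
    (hc : ∀ t ∈ Icc (0:ℝ) 1, HasDerivAt c (c' t) t)
    (hr : ∀ t ∈ Icc (0:ℝ) 1, HasDerivAt r (r' t) t)
    (hlt : ∀ t ∈ Icc (0:ℝ) 1, ‖c' t‖ < r' t) :
    (∀ τ ∈ Icc (0:ℝ) 1, ∀ t ∈ Icc (0:ℝ) 1, τ < t →
      Metric.closedBall (c τ) (r τ) ⊆ Metric.ball (c t) (r t)) ∧
    (∀ τ ∈ Icc (0:ℝ) 1, ∀ t ∈ Icc (0:ℝ) 1, τ ≠ t →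
      Metric.sphere (c τ) (r τ) ∩ Metric.sphere (c t) (r t) = ∅) := by
  have nested : ∀ τ ∈ Icc (0:ℝ) 1, ∀ t ∈ Icc (0:ℝ) 1, τ < t →
      closedBall (c τ) (r τ) ⊆ ball (c t) (r t) := by
    intro τ hτ t ht hτt
    have hsub : Icc τ t ⊆ Icc 0 1 := Icc_subset_Icc hτ.1 ht.2
    have hsub' : Ico τ t ⊆ Icc 0 1 := Ico_subset_Icc_self.trans hsub
    have key := norm_sub_lt_sub_of_norm_deriv_right_lt hτt
      (fun x hx => (hc x (hsub hx)).continuousAt.continuousWithinAt)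
      (fun x hx => (hc x (hsub' hx)).hasDerivWithinAt)
      (fun x hx => (hr x (hsub hx)).continuousAt.continuousWithinAt)
      (fun x hx => (hr x (hsub' hx)).hasDerivWithinAt)
      (fun x hx => hlt x (hsub' hx))
    exact closedBall_subset_ball' (by rw [dist_eq_norm']; linarith)
  refine ⟨nested, fun τ hτ t ht hne => ?_⟩
  rcases hne.lt_or_gt with h | h
  · exact sphere_inter_sphere_eq_empty_of_closedBall_subset_ball (nested τ hτ t ht h)
  · rw [inter_comm]
    exact sphere_inter_sphere_eq_empty_of_closedBall_subset_ball (nested t ht τ hτ h)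

theorem expanding_nested_spheres (m : ℕ) (hm : 1 ≤ m)
    (c : ℝ → EuclideanSpace ℝ (Fin m)) (r : ℝ → ℝ)
    (c' : ℝ → EuclideanSpace ℝ (Fin m)) (r' : ℝ → ℝ)
    (hc : ∀ t ∈ Icc (0:ℝ) 1, HasDerivAt c (c' t) t)
    (hr : ∀ t ∈ Icc (0:ℝ) 1, HasDerivAt r (r' t) t)
    (hlt : ∀ t ∈ Icc (0:ℝ) 1, ‖c' t‖ < r' t) :
    (∀ τ ∈ Icc (0:ℝ) 1, ∀ t ∈ Icc (0:ℝ) 1, τ < t →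
      Metric.closedBall (c τ) (r τ) ⊆ Metric.ball (c t) (r t)) ∧
    (∀ τ ∈ Icc (0:ℝ) 1, ∀ t ∈ Icc (0:ℝ) 1, τ ≠ t →
      Metric.sphere (c τ) (r τ) ∩ Metric.sphere (c t) (r t) = ∅) :=
  expanding_nested_spheres_general m c r c' r' hc hr hlt
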